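/- arXiv:2301.10519 — 2 statements merged into one kernel-verified Lean document; each statement's English description precedes it below -/
import Mathlib

section
/- MFO is strictly less expressive than finite-state automata: every MFO-definable language is regular, but there exists a regular language (namely L_even = { a^(2n) | n ≥ 1 } over the one-letter alphabet {a}) that is not MFO-definable. -/
/-- Formulas of monadic first-order logic of order (MFO) over alphabet `α`.
First-order variables are represented by natural numbers. -/
inductive MFO (α : Type) : Type
  | char : α → ℕ → MFO α          -- `a(x)`
  | lt : ℕ → ℕ → MFO α            -- `x < y`
  | not : MFO α → MFO α           -- `¬ φ`
  | or : MFO α → MFO α → MFO α    -- `φ ∨ ψ`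
  | ex : ℕ → MFO α → MFO α        -- `∃ x. φ`

namespace MFO

/-- Satisfaction of an MFO formula over a string `w` with assignment `ν`
mapping variables to positions of `w`. -/
def Sat {α : Type} (w : List α) : (ℕ → ℕ) → MFO α → Prop
  | ν, .char a x => w[ν x]? = some a
  | ν, .lt x y => ν x < ν y
  | ν, .not φ => ¬ Sat w ν φ
  | ν, .or φ ψ => Sat w ν φ ∨ Sat w ν ψ
  | ν, .ex x φ => ∃ i < w.length, Sat w (Function.update ν x i) φ

/-- Free variables of an MFO formula. -/
def fv {α : Type} : MFO α → Finset ℕ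
  | .char _ x => {x}
  | .lt x y => {x, y}
  | .not φ => fv φ
  | .or φ ψ => fv φ ∪ fv ψ
  | .ex x φ => fv φ \ {x}

/-- The language of nonempty strings defined by an MFO formula
(intended to be used with sentences, whose satisfaction does not
depend on the assignment). -/
def Lang {α : Type} (φ : MFO α) : Set (List α) :=
  {w | w ≠ [] ∧ Sat w (fun _ => 0) φ}

/-- `φ₁ ∧ φ₂` as the abbreviation `¬(¬φ₁ ∨ ¬φ₂)`. -/
def and {α : Type} (φ ψ : MFO α) : MFO α := .not (.or (.not φ) (.not ψ))

/-- A language (of nonempty strings) is MFO-definable iff it is the language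
of some MFO sentence (closed formula). -/
def Definable {α : Type} (L : Set (List α)) : Prop :=
  ∃ φ : MFO α, φ.fv = ∅ ∧ L = Lang φ

end MFO

/-- `L_even = { a^(2n) | n ≥ 1 }`: nonempty strings of even length over the
one-letter alphabet (modeled by `Unit`). -/
def Leven : Set (List Unit) := {w | w ≠ [] ∧ Even w.length}

/-!
Both halves rest on Ehrenfeucht–Fraïssé games. A formula of quantifier rank `k` does not
distinguish pointed words on which Duplicator wins the `k`-round game, and Duplicator's winning
strategies on `u, u'` and on `x, x'` combine into one on `u ++ x, u' ++ x'`. The rank-`k` type of a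
word (its first letter and, recursively, the set of triples (type, letter, type) over all its
splittings `u ++ a :: v`) takes finitely many values and forces the game equivalence, hence
membership of every extension `u ++ x` in a definable language: there are finitely many left
quotients, and Myhill–Nerode gives a DFA. On a one-letter alphabet all words of length at least
`2 ^ (k + 1) - 1` have the same rank-`k` type, so no sentence separates `a ^ 2 ^ (k + 1)` from
`a ^ (2 ^ (k + 1) + 1)`, while the parity language has only three left quotients.
-/

open Function

namespace Language

theorem isRegular_of_leftQuotient_factorsThrough {α β : Type*} [Finite β] {L : Language α}
    (f : List α → β) (hf : L.leftQuotient.FactorsThrough f) : L.IsRegular := by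
  refine .of_finite_range_leftQuotient <| (Set.finite_range (extend f L.leftQuotient ⊥)).subset ?_
  rintro _ ⟨u, rfl⟩
  exact ⟨f u, hf.extend_apply ⊥ u⟩

end Language

theorem Nat.exists_add_one_add_eq_of_le (N : ℕ) {m n i j : ℕ} (hm : 2 * N + 1 ≤ m)
    (hn : 2 * N + 1 ≤ n) (h : i + 1 + j = m) :
    ∃ i' j', i' + 1 + j' = n ∧ (i = i' ∨ N ≤ i ∧ N ≤ i') ∧ (j = j' ∨ N ≤ j ∧ N ≤ j') := by
  rcases lt_or_ge i N with hi | hi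
  · exact ⟨i, n - 1 - i, by omega, .inl rfl, .inr ⟨by omega, by omega⟩⟩
  rcases lt_or_ge j N with hj | hj
  · exact ⟨n - 1 - j, j, by omega, .inr ⟨hi, by omega⟩, .inl rfl⟩
  · exact ⟨N, n - 1 - N, by omega, .inr ⟨hi, le_rfl⟩, .inr ⟨hj, by omega⟩⟩

namespace MFO

variable {α : Type}

def qrank : MFO α → ℕ
  | .char _ _ | .lt _ _ => 0
  | .not φ => qrank φ
  | .or φ ψ => max (qrank φ) (qrank ψ)
  | .ex _ φ => qrank φ + 1

structure AtomicEquiv (w : List α) (ν : ℕ → ℕ) (v : List α) (μ : ℕ → ℕ) : Prop where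
  lt_length_iff : ∀ x, ν x < w.length ↔ μ x < v.length
  lt_iff : ∀ x y, ν x < ν y ↔ μ x < μ y
  getElem?_eq : ∀ x, w[ν x]? = v[μ x]?

variable {w v : List α} {ν μ : ℕ → ℕ}

theorem AtomicEquiv.refl (w : List α) (ν : ℕ → ℕ) : AtomicEquiv w ν w ν :=
  ⟨fun _ => .rfl, fun _ _ => .rfl, fun _ => rfl⟩

theorem AtomicEquiv.symm (h : AtomicEquiv w ν v μ) : AtomicEquiv v μ w ν :=
  ⟨fun x => (h.lt_length_iff x).symm, fun x y => (h.lt_iff x y).symm,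
    fun x => (h.getElem?_eq x).symm⟩

/-- Duplicator wins the `k`-round Ehrenfeucht–Fraïssé game on the pointed words `(w, ν)` and
`(v, μ)`; a round places a pebble named `x` on a position of either word. -/
def GameEquiv : ℕ → List α → (ℕ → ℕ) → List α → (ℕ → ℕ) → Prop
  | 0, w, ν, v, μ => AtomicEquiv w ν v μ
  | k + 1, w, ν, v, μ => AtomicEquiv w ν v μ ∧
      (∀ x, ∀ i < w.length, ∃ j < v.length, GameEquiv k w (update ν x i) v (update μ x j)) ∧
      (∀ x, ∀ j < v.length, ∃ i < w.length, GameEquiv k w (update ν x i) v (update μ x j))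

namespace GameEquiv

theorem atomicEquiv {k : ℕ} (h : GameEquiv k w ν v μ) : AtomicEquiv w ν v μ := by
  cases k with
  | zero => exact h
  | succ k => exact h.1

theorem refl (k : ℕ) (w : List α) (ν : ℕ → ℕ) : GameEquiv k w ν w ν := by
  induction k generalizing ν with
  | zero => exact AtomicEquiv.refl w ν
  | succ k ih =>
    exact ⟨AtomicEquiv.refl w ν, fun _ i hi => ⟨i, hi, ih _⟩, fun _ j hj => ⟨j, hj, ih _⟩⟩

theorem symm {k : ℕ} (h : GameEquiv k w ν v μ) : GameEquiv k v μ w ν := by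
  induction k generalizing ν μ with
  | zero => exact AtomicEquiv.symm h
  | succ k ih =>
    obtain ⟨hat, hforth, hback⟩ := h
    refine ⟨hat.symm, fun x j hj => ?_, fun x i hi => ?_⟩
    · obtain ⟨i, hi, he⟩ := hback x j hj
      exact ⟨i, hi, ih he⟩
    · obtain ⟨j, hj, he⟩ := hforth x i hi
      exact ⟨j, hj, ih he⟩

theorem of_succ {k : ℕ} (h : GameEquiv (k + 1) w ν v μ) : GameEquiv k w ν v μ := by
  induction k generalizing ν μ with
  | zero => exact h.1
  | succ k ih =>
    obtain ⟨hat, hforth, hback⟩ := h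
    refine ⟨hat, fun x i hi => ?_, fun x j hj => ?_⟩
    · obtain ⟨j, hj, he⟩ := hforth x i hi
      exact ⟨j, hj, ih he⟩
    · obtain ⟨i, hi, he⟩ := hback x j hj
      exact ⟨i, hi, ih he⟩

end GameEquiv

theorem sat_iff_sat_of_gameEquiv (φ : MFO α) {k : ℕ} (hk : φ.qrank ≤ k)
    (h : GameEquiv k w ν v μ) : Sat w ν φ ↔ Sat v μ φ := by
  induction φ generalizing k ν μ with
  | char a x => simp only [Sat, h.atomicEquiv.getElem?_eq x]
  | lt x y => exact h.atomicEquiv.lt_iff x y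
  | not φ ih => exact not_congr (ih hk h)
  | or φ ψ ihφ ihψ =>
    rw [qrank, max_le_iff] at hk
    exact or_congr (ihφ hk.1 h) (ihψ hk.2 h)
  | ex x φ ih =>
    obtain _ | k := k
    · simp [qrank] at hk
    obtain ⟨-, hforth, hback⟩ := h
    have hk : φ.qrank ≤ k := by simpa [qrank] using hk
    constructor
    · rintro ⟨i, hi, hsat⟩
      obtain ⟨j, hj, he⟩ := hforth x i hi
      exact ⟨j, hj, (ih hk he).1 hsat⟩
    · rintro ⟨j, hj, hsat⟩
      obtain ⟨i, hi, he⟩ := hback x j hj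
      exact ⟨i, hi, (ih hk he).2 hsat⟩

section Append

variable {u u' x x' : List α} {ν₁ ν₁' ν₂ ν₂' : ℕ → ℕ} {S : Set ℕ}

open Classical in
/-- An assignment on a concatenation `u ++ x` with `u.length = n`: variables in `S` point into
`u`, the others into `x`. -/
noncomputable def appendAssign (S : Set ℕ) (n : ℕ) (ν₁ ν₂ : ℕ → ℕ) : ℕ → ℕ :=
  fun z => if z ∈ S then ν₁ z else n + ν₂ z

theorem update_appendAssign_left (z i n : ℕ) :
    update (appendAssign S n ν₁ ν₂) z i = appendAssign (insert z S) n (update ν₁ z i) ν₂ := by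
  funext y
  by_cases hy : y = z
  · simp [appendAssign, hy]
  · simp only [appendAssign, update_of_ne hy]
    split_ifs <;> simp_all

theorem update_appendAssign_right (z j n : ℕ) :
    update (appendAssign S n ν₁ ν₂) z (n + j) = appendAssign (S \ {z}) n ν₁ (update ν₂ z j) := by
  funext y
  by_cases hy : y = z
  · simp [appendAssign, hy]
  · simp only [appendAssign, update_of_ne hy]
    split_ifs <;> simp_all

theorem AtomicEquiv.append (hS : ∀ z ∈ S, ν₁ z < u.length) (h₁ : AtomicEquiv u ν₁ u' ν₁')
    (h₂ : AtomicEquiv x ν₂ x' ν₂') :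
    AtomicEquiv (u ++ x) (appendAssign S u.length ν₁ ν₂)
      (u' ++ x') (appendAssign S u'.length ν₁' ν₂') := by
  have hS' : ∀ z ∈ S, ν₁' z < u'.length := fun z hz => (h₁.lt_length_iff z).1 (hS z hz)
  constructor
  · intro z
    simp only [appendAssign, List.length_append]
    split_ifs with hz
    · have := hS z hz; have := hS' z hz; omega
    · have := h₂.lt_length_iff z; omega
  · intro y z
    simp only [appendAssign]
    split_ifs with hy hz hz
    · exact h₁.lt_iff y z
    · have := hS y hy; have := hS' y hy; omega
    · have := hS z hz; have := hS' z hz; omega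
    · have := h₂.lt_iff y z; omega
  · intro z
    simp only [appendAssign]
    split_ifs with hz
    · rw [List.getElem?_append_left (hS z hz), List.getElem?_append_left (hS' z hz)]
      exact h₁.getElem?_eq z
    · rw [List.getElem?_append_right (by omega), List.getElem?_append_right (by omega)]
      simpa using h₂.getElem?_eq z

theorem GameEquiv.append {k : ℕ} (hS : ∀ z ∈ S, ν₁ z < u.length) (h₁ : GameEquiv k u ν₁ u' ν₁')
    (h₂ : GameEquiv k x ν₂ x' ν₂') :
    GameEquiv k (u ++ x) (appendAssign S u.length ν₁ ν₂)
      (u' ++ x') (appendAssign S u'.length ν₁' ν₂') := by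
  induction k generalizing u u' x x' ν₁ ν₁' ν₂ ν₂' S with
  | zero => exact AtomicEquiv.append hS h₁ h₂
  | succ k ih =>
    have forth : ∀ {u u' x x' : List α} {ν₁ ν₁' ν₂ ν₂' : ℕ → ℕ} {S : Set ℕ},
        (∀ z ∈ S, ν₁ z < u.length) → GameEquiv (k + 1) u ν₁ u' ν₁' →
        GameEquiv (k + 1) x ν₂ x' ν₂' → ∀ z, ∀ i < (u ++ x).length, ∃ j < (u' ++ x').length,
          GameEquiv k (u ++ x) (update (appendAssign S u.length ν₁ ν₂) z i)
            (u' ++ x') (update (appendAssign S u'.length ν₁' ν₂') z j) := by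
      intro u u' x x' ν₁ ν₁' ν₂ ν₂' S hS h₁ h₂ z i hi
      rw [List.length_append] at hi
      rcases lt_or_ge i u.length with hiu | hiu
      · obtain ⟨j, hj, he⟩ := h₁.2.1 z i hiu
        refine ⟨j, by simp; omega, ?_⟩
        rw [update_appendAssign_left, update_appendAssign_left]
        refine ih (fun y hy => ?_) he h₂.of_succ
        rcases eq_or_ne y z with rfl | hne
        · simpa
        · simpa [hne] using hS y (hy.resolve_left hne)
      · obtain ⟨i, rfl⟩ := Nat.exists_eq_add_of_le hiu
        obtain ⟨j, hj, he⟩ := h₂.2.1 z i (by omega)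
        refine ⟨u'.length + j, by simp; omega, ?_⟩
        rw [update_appendAssign_right, update_appendAssign_right]
        exact ih (fun y hy => hS y hy.1) h₁.of_succ he
    refine ⟨AtomicEquiv.append hS h₁.atomicEquiv h₂.atomicEquiv, forth hS h₁ h₂, fun z j hj => ?_⟩
    have hS' : ∀ z ∈ S, ν₁' z < u'.length :=
      fun z hz => (h₁.atomicEquiv.lt_length_iff z).1 (hS z hz)
    obtain ⟨i, hi, he⟩ := forth hS' h₁.symm h₂.symm z j hj
    exact ⟨i, hi, he.symm⟩

theorem appendAssign_univ (n : ℕ) (ν₁ ν₂ : ℕ → ℕ) : appendAssign Set.univ n ν₁ ν₂ = ν₁ := by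
  funext y
  simp [appendAssign]

theorem appendAssign_compl_singleton (z n : ℕ) (ν₁ ν₂ : ℕ → ℕ) :
    appendAssign {z}ᶜ n ν₁ ν₂ = update ν₁ z (n + ν₂ z) := by
  funext y
  by_cases hy : y = z <;> simp [appendAssign, hy]

theorem GameEquiv.eq_nil_iff {k : ℕ} (h : GameEquiv k w 0 v 0) : w = [] ↔ v = [] := by
  have := h.atomicEquiv.lt_length_iff 0
  simp only [Pi.zero_apply, List.length_pos_iff] at this
  exact not_iff_not.mp this

theorem GameEquiv.append_right {k : ℕ} (h : GameEquiv k u 0 u' 0) (x : List α) :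
    GameEquiv k (u ++ x) 0 (u' ++ x) 0 := by
  by_cases hu : u = []
  · rw [hu, h.eq_nil_iff.1 hu]
    exact .refl k x 0
  · have := h.append (S := Set.univ) (fun _ _ => List.length_pos_iff.2 hu) (.refl k x 0)
    rwa [appendAssign_univ, appendAssign_univ] at this

theorem GameEquiv.append_cons {k : ℕ} (hu : GameEquiv k u 0 u' 0) (hx : GameEquiv k x 0 x' 0)
    (a : α) (z : ℕ) :
    GameEquiv k (u ++ a :: x) (update 0 z u.length) (u' ++ a :: x') (update 0 z u'.length) := by
  have hax : GameEquiv k (a :: x) 0 (a :: x') 0 := by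
    have := (GameEquiv.refl k [a] 0).append (S := Set.univ) (fun _ _ => Nat.one_pos) hx
    rwa [appendAssign_univ] at this
  by_cases hnil : u = []
  · rw [hnil, hu.eq_nil_iff.1 hnil]
    simpa using hax
  · have := hu.append (S := {z}ᶜ) (fun _ _ => List.length_pos_iff.2 hnil) hax
    rwa [appendAssign_compl_singleton, appendAssign_compl_singleton, Pi.zero_apply, add_zero,
      add_zero] at this

end Append

theorem mem_lang_iff_of_gameEquiv {φ : MFO α} {k : ℕ} (hk : φ.qrank ≤ k)
    (h : GameEquiv k w 0 v 0) : w ∈ Lang φ ↔ v ∈ Lang φ :=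
  and_congr (not_congr h.eq_nil_iff) (sat_iff_sat_of_gameEquiv φ hk h)

variable (α) in
/-- Level `0` records only the first letter: a sentence is evaluated with every variable at
position `0`. -/
def WordType : ℕ → Type
  | 0 => Option α
  | k + 1 => WordType k × Set (WordType k × α × WordType k)

instance WordType.finite [Finite α] (k : ℕ) : Finite (WordType α k) := by
  induction k with
  | zero => exact inferInstanceAs (Finite (Option α))
  | succ k ih =>
    exact inferInstanceAs (Finite (WordType α k × Set (WordType α k × α × WordType α k)))

def wordType : (k : ℕ) → List α → WordType α k
  | 0, w => w[0]?
  | k + 1, w => (wordType k w, {p | ∃ u a v, w = u ++ a :: v ∧ p = (wordType k u, a, wordType k v)})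

theorem _root_.List.exists_eq_append_cons_of_lt_length {i : ℕ} (hi : i < w.length) :
    ∃ u a v, w = u ++ a :: v ∧ u.length = i :=
  ⟨w.take i, w[i], w.drop (i + 1), by simp, by simp [hi.le]⟩

theorem gameEquiv_of_wordType_eq {k : ℕ} (h : wordType k w = wordType k v) :
    GameEquiv k w 0 v 0 := by
  induction k generalizing w v with
  | zero =>
    refine ⟨fun _ => ?_, fun _ _ => .rfl, fun _ => h⟩
    have h : w[0]? = v[0]? := h
    simp only [Pi.zero_apply, ← not_le, ← List.getElem?_eq_none_iff, h]
  | succ k ih =>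
    have forth : ∀ {w v : List α}, wordType (k + 1) w = wordType (k + 1) v →
        ∀ z, ∀ i < w.length, ∃ j < v.length,
          GameEquiv k w (update 0 z i) v (update 0 z j) := by
      intro w v h z i hi
      obtain ⟨u, a, x, rfl, rfl⟩ := w.exists_eq_append_cons_of_lt_length hi
      have hsplit : (wordType k u, a, wordType k x) ∈ (wordType (k + 1) v).2 :=
        h ▸ ⟨u, a, x, rfl, rfl⟩
      obtain ⟨u', _, x', rfl, hp⟩ := hsplit
      simp only [Prod.mk.injEq] at hp
      obtain ⟨hu, rfl, hx⟩ := hp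
      exact ⟨u'.length, by simp, (ih hu).append_cons (ih hx) a z⟩
    refine ⟨(ih (congrArg Prod.fst h)).atomicEquiv, forth h, fun z j hj => ?_⟩
    obtain ⟨i, hi, he⟩ := forth h.symm z j hj
    exact ⟨i, hi, he.symm⟩

theorem isRegular_lang [Finite α] (φ : MFO α) : Language.IsRegular (Lang φ) :=
  Language.isRegular_of_leftQuotient_factorsThrough (L := Lang φ) (wordType φ.qrank) fun _ _ h =>
    Set.ext fun x => mem_lang_iff_of_gameEquiv le_rfl ((gameEquiv_of_wordType_eq h).append_right x)

theorem isRegular_of_definable [Finite α] {L : Set (List α)} (h : Definable L) :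
    Language.IsRegular L := by
  obtain ⟨φ, -, rfl⟩ := h
  exact isRegular_lang φ

theorem wordType_succ_replicate_snd (k m : ℕ) (a : α) :
    (wordType (k + 1) (List.replicate m a)).2 =
      {p | ∃ i j, i + 1 + j = m ∧
        p = (wordType k (List.replicate i a), a, wordType k (List.replicate j a))} := by
  ext p
  constructor
  · rintro ⟨u, b, v, h, rfl⟩
    obtain ⟨hlen, hu, hbv⟩ := List.replicate_eq_append_iff.1 h
    rw [List.length_cons, List.replicate_succ, List.cons.injEq] at hbv
    obtain ⟨rfl, hv⟩ := hbv
    refine ⟨u.length, v.length, by simp at hlen; omega, ?_⟩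
    rw [← hu, ← hv]
  · rintro ⟨i, j, rfl, rfl⟩
    exact ⟨List.replicate i a, a, List.replicate j a, by simp [List.replicate_add], rfl⟩

theorem wordType_replicate_eq (a : α) {k m n : ℕ} (hm : 2 ^ (k + 1) ≤ m + 1)
    (hn : 2 ^ (k + 1) ≤ n + 1) :
    wordType k (List.replicate m a) = wordType k (List.replicate n a) := by
  induction k generalizing m n with
  | zero =>
    obtain ⟨m, rfl⟩ := Nat.exists_eq_add_of_le' (show 1 ≤ m by omega)
    obtain ⟨n, rfl⟩ := Nat.exists_eq_add_of_le' (show 1 ≤ n by omega)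
    rfl
  | succ k ih =>
    have hpow : 2 ^ (k + 2) = 2 * 2 ^ (k + 1) := pow_succ' 2 (k + 1)
    have hpos : 1 ≤ 2 ^ (k + 1) := Nat.one_le_two_pow
    have large_eq : ∀ {i i'}, (i = i' ∨ 2 ^ (k + 1) - 1 ≤ i ∧ 2 ^ (k + 1) - 1 ≤ i') →
        wordType k (List.replicate i a) = wordType k (List.replicate i' a) := by
      rintro i i' (rfl | ⟨hi, hi'⟩)
      · rfl
      · exact ih (by omega) (by omega)
    have splits_subset : ∀ {m n}, 2 ^ (k + 2) ≤ m + 1 → 2 ^ (k + 2) ≤ n + 1 →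
        (wordType (k + 1) (List.replicate m a)).2 ⊆ (wordType (k + 1) (List.replicate n a)).2 := by
      intro m n hm hn
      rw [wordType_succ_replicate_snd, wordType_succ_replicate_snd]
      rintro _ ⟨i, j, hij, rfl⟩
      obtain ⟨i', j', hij', hi, hj⟩ :=
        Nat.exists_add_one_add_eq_of_le (2 ^ (k + 1) - 1) (m := m) (n := n) (by omega) (by omega)
          hij
      exact ⟨i', j', hij', by rw [large_eq hi, large_eq hj]⟩
    exact Prod.ext (ih (by omega) (by omega)) ((splits_subset hm hn).antisymm (splits_subset hn hm))

theorem mem_lang_replicate_iff (φ : MFO α) (a : α) {m : ℕ} (hm : 2 ^ (φ.qrank + 1) ≤ m + 1) :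
    List.replicate m a ∈ Lang φ ↔ List.replicate (m + 1) a ∈ Lang φ :=
  mem_lang_iff_of_gameEquiv le_rfl <|
    gameEquiv_of_wordType_eq (wordType_replicate_eq a hm (by omega))

theorem not_definable_leven : ¬ Definable Leven := by
  rintro ⟨φ, -, hφ⟩
  have h := mem_lang_replicate_iff φ () (m := 2 ^ (φ.qrank + 1)) (by omega)
  rw [← hφ] at h
  simp [Leven, pow_succ, Nat.even_add_one] at h

end MFO

theorem isRegular_leven : Language.IsRegular Leven :=
  Language.isRegular_of_leftQuotient_factorsThrough (L := Leven)
    (fun u => (decide (u = []), decide (Even u.length))) fun u v h => by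
      simp only [Prod.mk.injEq, decide_eq_decide] at h
      ext x
      change u ++ x ∈ Leven ↔ v ++ x ∈ Leven
      simp only [Leven, Set.mem_ofPred_eq, ne_eq, List.append_eq_nil_iff, h.1, List.length_append,
        Nat.even_add, h.2]

/-- MFO is strictly less expressive than finite-state automata:
every MFO-definable language is regular, but the regular language `L_even`
is not MFO-definable. -/
theorem mfo_strictly_less_expressive_than_fsa :
    (∀ (α : Type) [Fintype α] (L : Set (List α)), MFO.Definable L →
      ∃ (σ : Type) (_ : Fintype σ) (A : DFA α σ), L = A.accepts) ∧
    (∃ (σ : Type) (_ : Fintype σ) (A : DFA Unit σ), Leven = A.accepts) ∧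
    ¬ MFO.Definable Leven := by
  refine ⟨fun α _ L hL => ?_, ?_, MFO.not_definable_leven⟩
  · obtain ⟨σ, hσ, M, hM⟩ := MFO.isRegular_of_definable hL
    exact ⟨σ, hσ, M, hM.symm⟩
  · obtain ⟨σ, hσ, M, hM⟩ := isRegular_leven
    exact ⟨σ, hσ, M, hM.symm⟩
end

section
/- (Büchi–Elgot–Trakhtenbrot) A language L ⊆ Σ⁺ over a finite alphabet Σ is regular if, and only if, there exists an MSO sentence φ over Σ such that L = L(φ). -/
/-- Formulas of monadic second-order logic of order (MSO) over alphabet `α`.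
First-order and second-order (set) variables are represented by naturals. -/
inductive MSO (α : Type) : Type
  | char : α → ℕ → MSO α          -- `a(x)`
  | mem : ℕ → ℕ → MSO α           -- `X(x)` : `mem X x`
  | lt : ℕ → ℕ → MSO α            -- `x < y`
  | not : MSO α → MSO α
  | or : MSO α → MSO α → MSO α
  | ex1 : ℕ → MSO α → MSO α       -- `∃ x. φ`
  | ex2 : ℕ → MSO α → MSO α       -- `∃ X. φ`

namespace MSO

/-- Satisfaction of an MSO formula over a string `w` with first-order
assignment `ν₁` (positions) and second-order assignment `ν₂` (sets of positions). -/
def Sat {α : Type} (w : List α) : (ℕ → ℕ) → (ℕ → Set ℕ) → MSO α → Prop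
  | ν₁, _, .char a x => w[ν₁ x]? = some a
  | ν₁, ν₂, .mem X x => ν₁ x ∈ ν₂ X
  | ν₁, _, .lt x y => ν₁ x < ν₁ y
  | ν₁, ν₂, .not φ => ¬ Sat w ν₁ ν₂ φ
  | ν₁, ν₂, .or φ ψ => Sat w ν₁ ν₂ φ ∨ Sat w ν₁ ν₂ ψ
  | ν₁, ν₂, .ex1 x φ => ∃ i < w.length, Sat w (Function.update ν₁ x i) ν₂ φ
  | ν₁, ν₂, .ex2 X φ =>
      ∃ S : Set ℕ, (∀ i ∈ S, i < w.length) ∧ Sat w ν₁ (Function.update ν₂ X S) φ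

/-- Free first-order variables of an MSO formula. -/
def fv1 {α : Type} : MSO α → Finset ℕ
  | .char _ x => {x}
  | .mem _ x => {x}
  | .lt x y => {x, y}
  | .not φ => fv1 φ
  | .or φ ψ => fv1 φ ∪ fv1 ψ
  | .ex1 x φ => fv1 φ \ {x}
  | .ex2 _ φ => fv1 φ

/-- Free second-order variables of an MSO formula. -/
def fv2 {α : Type} : MSO α → Finset ℕ
  | .char _ _ => ∅
  | .mem X _ => {X}
  | .lt _ _ => ∅
  | .not φ => fv2 φ
  | .or φ ψ => fv2 φ ∪ fv2 ψ
  | .ex1 _ φ => fv2 φ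
  | .ex2 X φ => fv2 φ \ {X}

/-- The language of nonempty strings defined by an MSO formula
(intended to be used with sentences). -/
def Lang {α : Type} (φ : MSO α) : Set (List α) :=
  {w | w ≠ [] ∧ Sat w (fun _ => 0) (fun _ => ∅) φ}

/-- A language (of nonempty strings) is MSO-definable iff it is the language
of some MSO sentence (closed formula). -/
def Definable {α : Type} (L : Set (List α)) : Prop :=
  ∃ φ : MSO α, φ.fv1 = ∅ ∧ φ.fv2 = ∅ ∧ L = Lang φ

end MSO

/-!
Regular ⇒ definable: a run of a DFA with states `q` is guessed by set variables `X_q`, where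
`i ∈ X_q` means that the run is in state `q` after reading position `i`. A marking closed under
the initial step and the transitions contains the actual run, so a nonempty word is accepted iff
some closed marking puts the last position only into accepting states.

Definable ⇒ regular: a word together with an assignment is a word over the annotated alphabet
`α × Set (ℕ ⊕ ℕ)`, each position carrying the set of variables ("tracks") that hold it. Every
formula is recognized on such annotated words by a regular language: atoms need only tiny
automata, connectives are Boolean operations, and a quantifier erases its track, which is an
image followed by a preimage under a letter-to-letter map.
-/

namespace Language

variable {Γ Δ : Type}

theorem isRegular_preimage_of_append_singleton {σ : Type} [Fintype σ] (f : List Γ → σ)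
    (step : σ → Γ → σ) (hf : ∀ w a, f (w ++ [a]) = step (f w) a) (S : Set σ) :
    IsRegular (f ⁻¹' S : Language Γ) := by
  let M : DFA Γ σ := ⟨step, f [], S⟩
  have hM : ∀ w, M.eval w = f w := fun w => by
    induction w using List.reverseRecOn with
    | nil => rfl
    | append_singleton w a ih => rw [DFA.eval_append_singleton, ih, hf]
  exact ⟨σ, inferInstance, M, Set.ext fun w => show M.eval w ∈ S ↔ f w ∈ S by rw [hM]⟩

theorem isRegular_exists_mem (P : Γ → Prop) : IsRegular ({w | ∃ a ∈ w, P a} : Language Γ) :=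
  isRegular_preimage_of_append_singleton (fun w => ∃ a ∈ w, P a) (fun s a => s ∨ P a)
    (fun w a => by simp) {s | s}

theorem isRegular_pairwise_imp (P Q : Γ → Prop) :
    IsRegular ({w | w.Pairwise fun a b => P a → Q b} : Language Γ) :=
  isRegular_preimage_of_append_singleton
    (fun w => ((∃ a ∈ w, P a), w.Pairwise fun a b => P a → Q b))
    (fun s b => (s.1 ∨ P b, s.2 ∧ (s.1 → Q b)))
    (fun w b => by simp [List.pairwise_append]) {s | s.2}

theorem IsRegular.preimage_map (f : Δ → Γ) {L : Language Γ} (hL : L.IsRegular) :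
    IsRegular (List.map f ⁻¹' L : Language Δ) := by
  obtain ⟨σ, _, M, rfl⟩ := hL
  exact ⟨σ, inferInstance, M.comap f, M.accepts_comap f⟩

theorem IsRegular.image_map (f : Γ → Δ) {L : Language Γ} (hL : L.IsRegular) :
    IsRegular (List.map f '' L : Language Δ) := by
  classical
  obtain ⟨σ, _, M, rfl⟩ := hL
  let N : NFA Δ σ := ⟨fun s b => {t | ∃ a, f a = b ∧ M.step s a = t}, {M.start}, M.accept⟩
  have hN : ∀ v s t, t ∈ N.evalFrom {s} v ↔ ∃ u, u.map f = v ∧ M.evalFrom s u = t := by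
    intro v
    induction v with
    | nil => simp [eq_comm]
    | cons b v ih =>
      intro s t
      simp only [NFA.evalFrom_cons, NFA.stepSet_singleton, NFA.mem_evalFrom_iff_exists, ih]
      constructor
      · rintro ⟨_, ⟨a, rfl, rfl⟩, u, rfl, rfl⟩
        exact ⟨a :: u, rfl, rfl⟩
      · rintro ⟨_ | ⟨a, u⟩, hu, rfl⟩
        · cases hu
        · obtain ⟨rfl, rfl⟩ := List.cons_eq_cons.mp hu
          exact ⟨_, ⟨a, rfl, rfl⟩, u, rfl, rfl⟩
  refine ⟨Set σ, inferInstance, N.toDFA, ?_⟩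
  ext v
  rw [NFA.toDFA_correct, NFA.mem_accepts]
  simp only [N, hN]
  constructor
  · rintro ⟨_, hacc, u, rfl, rfl⟩
    exact ⟨u, hacc, rfl⟩
  · rintro ⟨u, hacc, rfl⟩
    exact ⟨_, hacc, u, rfl, rfl⟩

end Language

namespace List

variable {α V : Type}

def annotate (w : List α) (T : V → Set ℕ) : List (α × Set V) :=
  w.mapIdx fun i a => (a, {v | i ∈ T v})

def tracks (e : List (α × Set V)) (v : V) : Set ℕ :=
  {i | ∃ h : i < e.length, v ∈ e[i].2}

def eraseTrack (v : V) : List (α × Set V) → List (α × Set V) :=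
  map fun l => (l.1, l.2 \ {v})

@[simp] theorem length_annotate (w : List α) (T : V → Set ℕ) :
    (w.annotate T).length = w.length :=
  length_mapIdx

@[simp] theorem getElem_annotate (w : List α) (T : V → Set ℕ) {i : ℕ}
    (h : i < (w.annotate T).length) :
    (w.annotate T)[i] = (w[i]'(by simpa using h), {v | i ∈ T v}) :=
  getElem_mapIdx

theorem exists_mem_annotate_iff {w : List α} {T : V → Set ℕ} {P : α × Set V → Prop} :
    (∃ l ∈ w.annotate T, P l) ↔ ∃ i, ∃ h : i < w.length, P (w[i], {v | i ∈ T v}) := by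
  simp [annotate, mem_mapIdx]

theorem annotate_append_singleton (w : List α) (T : V → Set ℕ) (a : α) :
    (w ++ [a]).annotate T = w.annotate T ++ [(a, {v | w.length ∈ T v})] :=
  mapIdx_concat

theorem map_fst_annotate (w : List α) (T : V → Set ℕ) : (w.annotate T).map Prod.fst = w :=
  ext_getElem (by simp) fun i _ _ => by simp

theorem mem_tracks_annotate {w : List α} {T : V → Set ℕ} {v : V} {i : ℕ} :
    i ∈ (w.annotate T).tracks v ↔ i < w.length ∧ i ∈ T v := by
  simp [tracks]

theorem annotate_congr {w : List α} {T T' : V → Set ℕ}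
    (h : ∀ v, ∀ i < w.length, i ∈ T v ↔ i ∈ T' v) : w.annotate T = w.annotate T' :=
  ext_getElem (by simp) fun i hi _ => by
    simp only [getElem_annotate, Prod.mk.injEq, true_and]
    exact Set.ext fun v => h v i (by simpa using hi)

theorem annotate_map_fst_tracks (e : List (α × Set V)) : (e.map Prod.fst).annotate e.tracks = e :=
  ext_getElem (by simp) fun i _ hi => by simp [tracks, hi]

theorem tracks_eraseTrack_of_ne {e : List (α × Set V)} {u v : V} (h : u ≠ v) :
    (e.eraseTrack v).tracks u = e.tracks u := by
  ext i
  simp [tracks, eraseTrack, h]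

variable [DecidableEq V]

theorem eraseTrack_annotate (v : V) (w : List α) (T : V → Set ℕ) :
    (w.annotate T).eraseTrack v = w.annotate (Function.update T v ∅) :=
  ext_getElem (by simp [eraseTrack]) fun i _ _ => by
    simp only [eraseTrack, getElem_map, getElem_annotate, Prod.mk.injEq, true_and]
    ext u
    by_cases hu : u = v <;> simp [hu]

theorem eraseTrack_eq_eraseTrack_annotate_iff {e : List (α × Set V)} {v : V} {w : List α}
    {T : V → Set ℕ} :
    e.eraseTrack v = (w.annotate T).eraseTrack v ↔
      ∃ S : Set ℕ, (∀ i ∈ S, i < w.length) ∧ e = w.annotate (Function.update T v S) := by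
  rw [eraseTrack_annotate]
  constructor
  · intro h
    have hw : e.map Prod.fst = w := by
      rw [← map_fst_annotate w (Function.update T v ∅), ← h, eraseTrack, map_map]
      rfl
    refine ⟨e.tracks v, fun i hi => hw ▸ by simpa using hi.1, ?_⟩
    conv_lhs => rw [← annotate_map_fst_tracks e, hw]
    refine annotate_congr fun u i hi => ?_
    by_cases hu : u = v
    · subst hu; simp
    · rw [Function.update_of_ne hu, ← tracks_eraseTrack_of_ne hu, h, mem_tracks_annotate,
        Function.update_of_ne hu]
      exact and_iff_right hi
  · rintro ⟨S, -, rfl⟩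
    rw [eraseTrack_annotate, Function.update_idem]

end List

namespace Language

open List

variable {α V : Type}

def hideTrack (v : V) (K : Language (α × Set V)) : Language (α × Set V) :=
  eraseTrack v ⁻¹' (eraseTrack v '' K)

def singleTrack (v : V) : Language (α × Set V) :=
  {e | ∃ l ∈ e, v ∈ l.2} ⊓ {e | e.Pairwise fun l l' => v ∈ l.2 → v ∉ l'.2}

theorem IsRegular.hideTrack (v : V) {K : Language (α × Set V)}
    (hK : K.IsRegular) : (hideTrack v K).IsRegular :=
  IsRegular.preimage_map _ (hK.image_map _)

theorem isRegular_singleTrack (v : V) : (singleTrack (α := α) v).IsRegular :=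
  (isRegular_exists_mem _).inf (isRegular_pairwise_imp _ _)

theorem annotate_mem_hideTrack_iff [DecidableEq V] {v : V} {K : Language (α × Set V)}
    {w : List α} {T : V → Set ℕ} :
    w.annotate T ∈ hideTrack v K ↔
      ∃ S : Set ℕ, (∀ i ∈ S, i < w.length) ∧ w.annotate (Function.update T v S) ∈ K := by
  change (∃ e ∈ K, e.eraseTrack v = (w.annotate T).eraseTrack v) ↔ _
  simp only [eraseTrack_eq_eraseTrack_annotate_iff]
  constructor
  · rintro ⟨e, he, S, hS, rfl⟩
    exact ⟨S, hS, he⟩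
  · rintro ⟨S, hS, he⟩
    exact ⟨_, he, S, hS, rfl⟩

theorem annotate_mem_singleTrack_iff {w : List α} {T : V → Set ℕ} {v : V}
    (hT : ∀ i ∈ T v, i < w.length) :
    w.annotate T ∈ singleTrack v ↔ ∃ i < w.length, T v = {i} := by
  refine (and_congr exists_mem_annotate_iff pairwise_iff_getElem).trans ?_
  simp only [getElem_annotate, length_annotate, Set.mem_ofPred_eq]
  constructor
  · rintro ⟨⟨i, hi, hiT⟩, hunique⟩
    refine ⟨i, hi, Set.eq_singleton_iff_unique_mem.mpr ⟨hiT, fun j hjT => ?_⟩⟩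
    rcases lt_trichotomy j i with hji | rfl | hij
    · exact absurd hiT (hunique j i (hT j hjT) hi hji hjT)
    · rfl
    · exact absurd hjT (hunique i j hi (hT j hjT) hij hiT)
  · rintro ⟨i, hi, hTv⟩
    simp only [hTv, Set.mem_singleton_iff]
    exact ⟨⟨i, hi, rfl⟩, fun j k _ _ hjk hj hk => hjk.ne (hj.trans hk.symm)⟩

theorem IsRegular.preimage_annotate {T : V → Set ℕ} (hT : ∀ v, T v ⊆ {0})
    {K : Language (α × Set V)} (hK : K.IsRegular) :
    IsRegular ({w | w.annotate T ∈ K} : Language α) := by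
  obtain ⟨σ, _, M, rfl⟩ := hK
  -- Since `T` only marks position `0`, the next letter depends only on whether `w` is empty.
  have hmark : ∀ w : List α,
      {v | w.length ∈ T v} = {v | (if w.isEmpty then 0 else 1) ∈ T v} := by
    rintro (_ | ⟨a, w⟩)
    · rfl
    · ext v
      exact iff_of_false (fun h => by simpa using hT v h) (fun h => by simpa using hT v h)
  refine isRegular_preimage_of_append_singleton (fun w => (M.eval (w.annotate T), w.isEmpty))
    (fun s a => (M.step s.1 (a, {v | (if s.2 then 0 else 1) ∈ T v}), false))
    (fun w a => ?_) {s | s.1 ∈ M.accept}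
  simp [annotate_append_singleton, hmark]

end Language

namespace MSO

open List Language

variable {α : Type} {w : List α} {ν₁ : ℕ → ℕ} {ν₂ : ℕ → Set ℕ}

def assignment (ν₁ : ℕ → ℕ) (ν₂ : ℕ → Set ℕ) : ℕ ⊕ ℕ → Set ℕ :=
  Sum.elim (fun x => {ν₁ x}) ν₂

/-- Annotation records only positions inside the word, so first-order values must lie there. -/
def Recognizes (K : Language (α × Set (ℕ ⊕ ℕ))) (φ : MSO α) : Prop :=
  ∀ w ν₁ ν₂, (∀ x, ν₁ x < w.length) → (w.annotate (assignment ν₁ ν₂) ∈ K ↔ Sat w ν₁ ν₂ φ)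

theorem update_assignment_inl (ν₁ : ℕ → ℕ) (ν₂ : ℕ → Set ℕ) (x i : ℕ) :
    Function.update (assignment ν₁ ν₂) (.inl x) {i} = assignment (Function.update ν₁ x i) ν₂ := by
  rw [assignment, Sum.update_elim_inl, assignment]
  congr 1
  funext y
  by_cases hy : y = x <;> simp [hy]

theorem recognizes_char (a : α) (x : ℕ) :
    Recognizes {e | ∃ l ∈ e, .inl x ∈ l.2 ∧ l.1 = a} (char a x) := by
  intro w ν₁ ν₂ _
  refine exists_mem_annotate_iff.trans ?_
  simp only [Set.mem_ofPred_eq, assignment, Sum.elim_inl, Set.mem_singleton_iff, Sat,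
    getElem?_eq_some_iff]
  constructor
  · rintro ⟨i, hi, rfl, h⟩
    exact ⟨hi, h⟩
  · rintro ⟨hi, h⟩
    exact ⟨_, hi, rfl, h⟩

theorem recognizes_mem (X x : ℕ) :
    Recognizes {e | ∃ l ∈ e, .inl x ∈ l.2 ∧ .inr X ∈ l.2} (mem (α := α) X x) := by
  intro w ν₁ ν₂ hν
  refine exists_mem_annotate_iff.trans ?_
  simp only [Set.mem_ofPred_eq, assignment, Sum.elim_inl, Sum.elim_inr, Set.mem_singleton_iff, Sat]
  constructor
  · rintro ⟨i, hi, rfl, h⟩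
    exact h
  · intro h
    exact ⟨_, hν x, rfl, h⟩

theorem recognizes_lt (x y : ℕ) :
    Recognizes {e | ¬ e.Pairwise fun l l' => .inl x ∈ l.2 → .inl y ∉ l'.2} (lt (α := α) x y) := by
  intro w ν₁ ν₂ hν
  refine (not_congr pairwise_iff_getElem).trans ?_
  simp only [getElem_annotate, assignment, Sat]
  push Not
  constructor
  · rintro ⟨i, j, -, -, hij, rfl, rfl⟩
    exact hij
  · intro h
    exact ⟨_, _, by simpa using hν x, by simpa using hν y, h, rfl, rfl⟩

theorem Recognizes.not {K : Language (α × Set (ℕ ⊕ ℕ))} {φ : MSO α} (h : Recognizes K φ) :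
    Recognizes Kᶜ (.not φ) :=
  fun w ν₁ ν₂ hν => (h w ν₁ ν₂ hν).not

theorem Recognizes.or {K K' : Language (α × Set (ℕ ⊕ ℕ))} {φ ψ : MSO α}
    (h : Recognizes K φ) (h' : Recognizes K' ψ) : Recognizes (K + K') (.or φ ψ) :=
  fun w ν₁ ν₂ hν => (mem_add _ _ _).trans ((h w ν₁ ν₂ hν).or (h' w ν₁ ν₂ hν))

theorem Recognizes.ex1 {K : Language (α × Set (ℕ ⊕ ℕ))} {φ : MSO α} (h : Recognizes K φ)
    (x : ℕ) : Recognizes (hideTrack (.inl x) (K ⊓ singleTrack (.inl x))) (.ex1 x φ) := by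
  intro w ν₁ ν₂ hν
  have hν' : ∀ i < w.length, ∀ y, Function.update ν₁ x i y < w.length := fun i hi y => by
    by_cases hy : y = x <;> simp [hy, hi, hν]
  simp only [annotate_mem_hideTrack_iff, mem_inf]
  constructor
  · rintro ⟨S, hS, hK, hsingle⟩
    obtain ⟨i, hi, hSi⟩ := (annotate_mem_singleTrack_iff (by simpa using hS)).mp hsingle
    rw [Function.update_self] at hSi
    subst hSi
    rw [update_assignment_inl] at hK
    exact ⟨i, hi, (h w _ ν₂ (hν' i hi)).mp hK⟩
  · rintro ⟨i, hi, hsat⟩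
    refine ⟨{i}, by simpa using hi, ?_,
      (annotate_mem_singleTrack_iff (by simpa using hi)).mpr ⟨i, hi, by simp⟩⟩
    rw [update_assignment_inl]
    exact (h w _ ν₂ (hν' i hi)).mpr hsat

theorem Recognizes.ex2 {K : Language (α × Set (ℕ ⊕ ℕ))} {φ : MSO α} (h : Recognizes K φ)
    (X : ℕ) : Recognizes (hideTrack (.inr X) K) (.ex2 X φ) := by
  intro w ν₁ ν₂ hν
  simp only [annotate_mem_hideTrack_iff, assignment, Sum.update_elim_inr]
  exact exists_congr fun S => and_congr_right fun _ => h w ν₁ _ hν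

theorem exists_isRegular_recognizes (φ : MSO α) : ∃ K, K.IsRegular ∧ Recognizes K φ := by
  induction φ with
  | char a x => exact ⟨_, isRegular_exists_mem _, recognizes_char a x⟩
  | mem X x => exact ⟨_, isRegular_exists_mem _, recognizes_mem X x⟩
  | lt x y => exact ⟨_, (isRegular_pairwise_imp _ _).compl, recognizes_lt x y⟩
  | not φ ih =>
    obtain ⟨K, hK, h⟩ := ih
    exact ⟨_, hK.compl, h.not⟩
  | or φ ψ ihφ ihψ =>
    obtain ⟨K, hK, h⟩ := ihφ
    obtain ⟨K', hK', h'⟩ := ihψ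
    exact ⟨_, hK.add hK', h.or h'⟩
  | ex1 x φ ih =>
    obtain ⟨K, hK, h⟩ := ih
    exact ⟨_, (hK.inf (isRegular_singleTrack _)).hideTrack _, h.ex1 x⟩
  | ex2 X φ ih =>
    obtain ⟨K, hK, h⟩ := ih
    exact ⟨_, hK.hideTrack _, h.ex2 X⟩

theorem isRegular_lang (φ : MSO α) : IsRegular (Lang φ) := by
  obtain ⟨K, hK, hφ⟩ := exists_isRegular_recognizes φ
  have hT : ∀ v, assignment (fun _ => 0) (fun _ => ∅) v ⊆ {0} := by
    rintro (x | X) <;> simp [assignment]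
  have hLang : Lang φ =
      {w | ∃ a ∈ w, True} ⊓ {w | w.annotate (assignment (fun _ => 0) (fun _ => ∅)) ∈ K} := by
    ext w
    change w ≠ [] ∧ _ ↔ (∃ a ∈ w, True) ∧ _
    simp only [and_true, ← length_pos_iff_exists_mem, ← length_pos_iff]
    exact and_congr_right fun hw => (hφ w (fun _ => 0) (fun _ => ∅) fun _ => hw).symm
  rw [hLang]
  exact (isRegular_exists_mem _).inf (hK.preimage_annotate hT)

def bot : MSO α := .ex1 0 (.lt 0 0)
def top : MSO α := .not bot
def conj (φ ψ : MSO α) : MSO α := .not (.or (.not φ) (.not ψ))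
def imp (φ ψ : MSO α) : MSO α := .or (.not φ) ψ
def all1 (x : ℕ) (φ : MSO α) : MSO α := .not (.ex1 x (.not φ))
def bigConj (l : List (MSO α)) : MSO α := l.foldr conj top
def ex2List (l : List ℕ) (φ : MSO α) : MSO α := l.foldr ex2 φ

@[simp] theorem sat_top : Sat w ν₁ ν₂ (top : MSO α) := fun ⟨_, _, h⟩ => lt_irrefl _ h

@[simp] theorem sat_conj {φ ψ : MSO α} :
    Sat w ν₁ ν₂ (conj φ ψ) ↔ Sat w ν₁ ν₂ φ ∧ Sat w ν₁ ν₂ ψ :=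
  not_or.trans (and_congr not_not not_not)

@[simp] theorem sat_imp {φ ψ : MSO α} :
    Sat w ν₁ ν₂ (imp φ ψ) ↔ (Sat w ν₁ ν₂ φ → Sat w ν₁ ν₂ ψ) :=
  imp_iff_not_or.symm

@[simp] theorem sat_all1 {x : ℕ} {φ : MSO α} :
    Sat w ν₁ ν₂ (all1 x φ) ↔ ∀ i < w.length, Sat w (Function.update ν₁ x i) ν₂ φ := by
  simp [all1, Sat]

@[simp] theorem sat_bigConj {l : List (MSO α)} :
    Sat w ν₁ ν₂ (bigConj l) ↔ ∀ φ ∈ l, Sat w ν₁ ν₂ φ := by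
  induction l with
  | nil => simp [bigConj]
  | cons φ l ih => simp [bigConj, ← ih]

theorem sat_ex2List {l : List ℕ} {φ : MSO α} :
    Sat w ν₁ ν₂ (ex2List l φ) ↔ ∃ ν₂' : ℕ → Set ℕ, (∀ X ∈ l, ∀ i ∈ ν₂' X, i < w.length) ∧
      (∀ X ∉ l, ν₂' X = ν₂ X) ∧ Sat w ν₁ ν₂' φ := by
  induction l generalizing ν₂ with
  | nil =>
    exact ⟨fun h => ⟨ν₂, by simp, by simp, h⟩,
      fun ⟨ν₂', _, h, hsat⟩ => (funext fun X => h X (by simp)) ▸ hsat⟩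
  | cons X l ih =>
    change (∃ S, (∀ i ∈ S, i < w.length) ∧ Sat w ν₁ _ (ex2List l φ)) ↔ _
    simp only [ih, List.mem_cons, forall_eq_or_imp, not_or]
    constructor
    · rintro ⟨S, hS, ν₂', hbdd, hout, hsat⟩
      refine ⟨ν₂', ⟨?_, hbdd⟩, fun Y ⟨hYX, hYl⟩ => by rw [hout Y hYl, Function.update_of_ne hYX],
        hsat⟩
      by_cases hXl : X ∈ l
      · exact hbdd X hXl
      · simpa [hout X hXl] using hS
    · rintro ⟨ν₂', ⟨hX, hbdd⟩, hout, hsat⟩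
      refine ⟨ν₂' X, hX, ν₂', hbdd, fun Y hYl => ?_, hsat⟩
      by_cases hYX : Y = X
      · subst hYX; simp
      · rw [Function.update_of_ne hYX, hout Y ⟨hYX, hYl⟩]

theorem mem_fv1_bigConj {l : List (MSO α)} {x : ℕ} :
    x ∈ (bigConj l).fv1 ↔ ∃ φ ∈ l, x ∈ φ.fv1 := by
  induction l with
  | nil => simp [bigConj, top, bot, fv1]
  | cons φ l ih =>
    simp only [bigConj, List.foldr_cons] at ih ⊢
    simp [conj, fv1, ih]

theorem mem_fv2_bigConj {l : List (MSO α)} {X : ℕ} :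
    X ∈ (bigConj l).fv2 ↔ ∃ φ ∈ l, X ∈ φ.fv2 := by
  induction l with
  | nil => simp [bigConj, top, bot, fv2]
  | cons φ l ih =>
    simp only [bigConj, List.foldr_cons] at ih ⊢
    simp [conj, fv2, ih]

theorem fv1_ex2List {l : List ℕ} {φ : MSO α} : (ex2List l φ).fv1 = φ.fv1 := by
  induction l with
  | nil => rfl
  | cons X l ih => exact ih

theorem mem_fv2_ex2List {l : List ℕ} {φ : MSO α} {X : ℕ} :
    X ∈ (ex2List l φ).fv2 ↔ X ∈ φ.fv2 ∧ X ∉ l := by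
  induction l with
  | nil => simp [ex2List]
  | cons Y l ih =>
    simp only [ex2List, List.foldr_cons, fv2, Finset.mem_sdiff, Finset.mem_singleton,
      List.mem_cons, not_or] at ih ⊢
    rw [ih]
    tauto

end MSO

namespace DFA

open MSO

variable {α σ : Type} (A : DFA α σ) {w : List α}

/-- `X q` is meant to hold the positions `i` at which the run is in state `q` after reading
`w[i]`. -/
def IsRunClosed (w : List α) (X : σ → Set ℕ) : Prop :=
  (∀ h : 0 < w.length, 0 ∈ X (A.step A.start (w[0]'h))) ∧
    ∀ i (h : i + 1 < w.length) q, i ∈ X q → i + 1 ∈ X (A.step q (w[i + 1]'h))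

theorem IsRunClosed.eval_take_mem {A : DFA α σ} {X : σ → Set ℕ} (hX : A.IsRunClosed w X) :
    ∀ i < w.length, i ∈ X (A.eval (w.take (i + 1)))
  | 0, h => by simpa [List.take_one, List.head?_eq_getElem?, h] using hX.1 h
  | i + 1, h => by
    rw [List.take_succ_eq_append_getElem h, eval_append_singleton]
    exact hX.2 i h _ (hX.eval_take_mem i (by omega))

theorem isRunClosed_runMarking (w : List α) :
    A.IsRunClosed w fun q => {i | i < w.length ∧ A.eval (w.take (i + 1)) = q} := by
  refine ⟨fun h => ⟨h, by simp [List.take_one, List.head?_eq_getElem?, h]⟩,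
    fun i h q hq => ⟨h, ?_⟩⟩
  rw [List.take_succ_eq_append_getElem h, eval_append_singleton, hq.2]

theorem mem_accepts_iff_exists_isRunClosed (hw : w ≠ []) :
    w ∈ A.accepts ↔ ∃ X : σ → Set ℕ, (∀ q, ∀ i ∈ X q, i < w.length) ∧ A.IsRunClosed w X ∧
      ∀ q ∉ A.accept, w.length - 1 ∉ X q := by
  have hlast : w.take (w.length - 1 + 1) = w := by
    rw [Nat.sub_add_cancel (List.length_pos_iff.mpr hw), List.take_length]
  constructor
  · intro hacc
    refine ⟨_, fun q i hi => hi.1, A.isRunClosed_runMarking w, fun q hq hmem => hq ?_⟩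
    rw [← hmem.2, hlast]
    exact hacc
  · rintro ⟨X, -, hX, hfinal⟩
    by_contra hrej
    have hrun := hX.eval_take_mem _ (Nat.sub_lt (List.length_pos_iff.mpr hw) one_pos)
    rw [hlast] at hrun
    exact hfinal _ hrej hrun

variable [Fintype σ] {ν₁ : ℕ → ℕ} {ν₂ : ℕ → Set ℕ}

noncomputable def stateVar (q : σ) : ℕ := Fintype.equivFin σ q

theorem stateVar_lt (q : σ) : stateVar q < Fintype.card σ := (Fintype.equivFin σ q).isLt

noncomputable def initFormula [Fintype α] : MSO α :=
  all1 0 (imp (.not (.ex1 1 (.lt 1 0)))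
    (bigConj (Finset.univ.toList.map fun a =>
      imp (.char a 0) (.mem (stateVar (A.step A.start a)) 0))))

noncomputable def transFormula [Fintype α] : MSO α :=
  all1 0 (all1 1 (imp (conj (.lt 0 1) (.not (.ex1 2 (conj (.lt 0 2) (.lt 2 1)))))
    (bigConj (Finset.univ.toList.map fun q => bigConj (Finset.univ.toList.map fun a =>
      imp (.mem (stateVar q) 0) (imp (.char a 1) (.mem (stateVar (A.step q a)) 1)))))))

open Classical in
noncomputable def finalFormula : MSO α :=
  all1 0 (imp (.not (.ex1 1 (.lt 0 1)))
    (bigConj ((Finset.univ.filter (· ∉ A.accept)).toList.map fun q => .not (.mem (stateVar q) 0))))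

noncomputable def toMSO [Fintype α] : MSO α :=
  ex2List (List.range (Fintype.card σ)) (conj A.initFormula (conj A.transFormula A.finalFormula))

theorem sat_initFormula [Fintype α] :
    Sat w ν₁ ν₂ A.initFormula ↔
      ∀ h : 0 < w.length, 0 ∈ ν₂ (stateVar (A.step A.start (w[0]'h))) := by
  simp only [initFormula, sat_all1, sat_imp, sat_bigConj, Sat, Function.update_self,
    Function.update_of_ne, ne_eq, zero_ne_one, not_false_eq_true, not_exists, not_and, not_lt,
    List.mem_map, Finset.mem_toList, Finset.mem_univ, true_and, forall_exists_index,
    forall_apply_eq_imp_iff]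
  constructor
  · intro h hw
    exact h 0 hw (fun _ _ => Nat.zero_le _) _ (List.getElem?_eq_getElem hw)
  · intro h i hi hfirst a ha
    obtain rfl : i = 0 := Nat.le_zero.mp (hfirst 0 (by omega))
    rw [List.getElem?_eq_getElem hi, Option.some.injEq] at ha
    exact ha ▸ h hi

theorem sat_transFormula [Fintype α] :
    Sat w ν₁ ν₂ A.transFormula ↔ ∀ i (h : i + 1 < w.length) q,
      i ∈ ν₂ (stateVar q) → i + 1 ∈ ν₂ (stateVar (A.step q w[i + 1])) := by
  simp only [transFormula, sat_all1, sat_imp, sat_conj, sat_bigConj, Sat, Function.update_self,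
    Function.update_of_ne, ne_eq, OfNat.zero_ne_ofNat, OfNat.one_ne_ofNat, zero_ne_one,
    not_false_eq_true, not_exists, not_and, not_lt, List.mem_map, Finset.mem_toList,
    Finset.mem_univ, true_and, forall_exists_index, forall_apply_eq_imp_iff, and_imp]
  constructor
  · intro h i hi q hq
    exact h i (by omega) (i + 1) hi (by omega) (fun m _ hm => hm) q _ hq
      (List.getElem?_eq_getElem hi)
  · intro h i _ j hj hij hsucc q a hq ha
    obtain rfl : j = i + 1 := le_antisymm (hsucc (i + 1) (by omega) (by omega)) hij
    rw [List.getElem?_eq_getElem hj, Option.some.injEq] at ha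
    exact ha ▸ h i hj q hq

theorem sat_finalFormula (hw : w ≠ []) :
    Sat w ν₁ ν₂ A.finalFormula ↔ ∀ q ∉ A.accept, w.length - 1 ∉ ν₂ (stateVar q) := by
  simp only [finalFormula, sat_all1, sat_imp, sat_bigConj, Sat, Function.update_self,
    Function.update_of_ne, ne_eq, zero_ne_one, not_false_eq_true, not_exists, not_and, not_lt,
    List.mem_map, Finset.mem_toList, Finset.mem_filter, Finset.mem_univ, true_and,
    forall_exists_index, and_imp, forall_apply_eq_imp_iff₂]
  have hlen := List.length_pos_iff.mpr hw
  constructor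
  · intro h q hq
    exact h _ (by omega) (fun _ _ => by omega) q hq
  · intro h i hi hlast q hq
    obtain rfl : i = w.length - 1 :=
      le_antisymm (by omega) (by have := hlast (w.length - 1); omega)
    exact h q hq

theorem sat_toMSO_iff [Fintype α] (hw : w ≠ []) :
    Sat w (fun _ => 0) (fun _ => ∅) A.toMSO ↔ w ∈ A.accepts := by
  rw [A.mem_accepts_iff_exists_isRunClosed hw, toMSO, sat_ex2List]
  simp only [sat_conj, sat_initFormula, sat_transFormula, sat_finalFormula A hw]
  constructor
  · rintro ⟨ν₂, hbdd, -, hinit, htrans, hfinal⟩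
    exact ⟨fun q => ν₂ (stateVar q), fun q => hbdd _ (List.mem_range.mpr (stateVar_lt q)),
      ⟨hinit, htrans⟩, hfinal⟩
  · rintro ⟨X, hbdd, ⟨hinit, htrans⟩, hfinal⟩
    let ν₂ : ℕ → Set ℕ := fun V =>
      if h : V < Fintype.card σ then X ((Fintype.equivFin σ).symm ⟨V, h⟩) else ∅
    have hν₂ : ∀ q, ν₂ (stateVar q) = X q := fun q => by simp [ν₂, stateVar]
    refine ⟨ν₂, fun V _ i hi => ?_, fun V hV => ?_, ?_⟩
    · simp only [ν₂] at hi
      split_ifs at hi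
      · exact hbdd _ i hi
      · exact hi.elim
    · simp [ν₂, List.mem_range.not.mp hV]
    · simp only [hν₂]
      exact ⟨hinit, htrans, hfinal⟩

theorem fv1_toMSO [Fintype α] : A.toMSO.fv1 = ∅ := by
  ext x
  simp +contextual [toMSO, fv1_ex2List, initFormula, transFormula, finalFormula, conj, imp, all1,
    fv1, mem_fv1_bigConj, or_imp]

theorem fv2_toMSO [Fintype α] : A.toMSO.fv2 = ∅ := by
  ext X
  simp +contextual [toMSO, mem_fv2_ex2List, initFormula, transFormula, finalFormula, conj, imp,
    all1, fv2, mem_fv2_bigConj, or_imp, stateVar_lt]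

end DFA

/-- Büchi–Elgot–Trakhtenbrot: A language `L ⊆ Σ⁺` over a
finite alphabet is regular (accepted by a DFA with finitely many states)
iff there is an MSO sentence `φ` with `L = L(φ)`. -/
theorem regular_iff_mso_definable {α : Type} [Fintype α] (L : Set (List α))
    (hL : L ⊆ {w : List α | w ≠ []}) :
    (∃ (σ : Type) (_ : Fintype σ) (A : DFA α σ), L = A.accepts) ↔
    (∃ φ : MSO α, φ.fv1 = ∅ ∧ φ.fv2 = ∅ ∧ L = MSO.Lang φ) := by
  constructor
  · rintro ⟨σ, _, A, rfl⟩
    refine ⟨A.toMSO, A.fv1_toMSO, A.fv2_toMSO, Set.ext fun w => ?_⟩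
    exact ⟨fun hw => ⟨hL hw, (A.sat_toMSO_iff (hL hw)).mpr hw⟩,
      fun ⟨hw, hsat⟩ => (A.sat_toMSO_iff hw).mp hsat⟩
  · rintro ⟨φ, -, -, rfl⟩
    obtain ⟨σ, hσ, A, hA⟩ := MSO.isRegular_lang φ
    exact ⟨σ, hσ, A, hA.symm⟩
end
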